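/- For every real t1 > 0, the quadratic polynomial p2(s) = 1728 s^2 - 432(1 + 4t1) s + (3 + 4t1)^2 (3 + 16t1) has no zeros in the open interval (0, 1/8) (in fact it has no real zeros at all), and the polynomial p3(s) = (8s - 8t1 - 1)^2 has no zeros in (0, 1/8). -/
import Mathlib


noncomputable section

/-- The quadratic factor `p2` of the discriminant. -/
def p2 (t1 s : ℝ) : ℝ :=
  1728*s^2 - 432*(1 + 4*t1)*s + (3 + 4*t1)^2*(3 + 16*t1)

/-- The factor `p3` of the discriminant. -/
def p3 (t1 s : ℝ) : ℝ :=
  (8*s - 8*t1 - 1)^2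

/-- For `t1 > 0`, the polynomial `p2` has no real zeros at all (in particular none in
`(0, 1/8)`), and `p3` has no zeros in `(0, 1/8)`. -/
theorem p2_p3_no_zeros (t1 : ℝ) (ht1 : 0 < t1) :
    (∀ s : ℝ, p2 t1 s ≠ 0) ∧
    (∀ s : ℝ, 0 < s → s < 1/8 → p3 t1 s ≠ 0) := by
  constructor
  · intro s
    have : 0 < p2 t1 s := by
      unfold p2
      nlinarith [sq_nonneg (s - (1+4*t1)/8), sq_nonneg t1, sq_nonneg (t1*s), mul_pos ht1 ht1, sq_nonneg (s - t1)]
    linarith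
  · intro s hs hs' h
    unfold p3 at h
    have : 8*s - 8*t1 - 1 = 0 := by nlinarith [sq_nonneg (8*s-8*t1-1)]
    linarith
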